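/- arXiv:2110.09692 — 2 statements merged into one kernel-verified Lean document; each statement's English description precedes it below -/
import Mathlib

section
/- Let C, D ⊂ ℝ∖{0} be finite sets and let 𝓛 be the set of lines {y = cx+d : c ∈ C, d ∈ D}. Then the line energy satisfies E(𝓛) ≤ E^×(C)·E⁺(D). -/
/-!
Write the lines as `ℓᵢ = (cᵢ, dᵢ)`. Then `f_{ℓ₁}⁻¹ ∘ f_{ℓ₂} = f_{ℓ₃}⁻¹ ∘ f_{ℓ₄}` holds iff
`c₂c₃ = c₄c₁` and `(d₂ - d₁)c₃ = (d₄ - d₃)c₁`. The slopes of such a quadruple form a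
multiplicative quadruple of `C`, so it suffices to bound, for fixed nonzero `a, b`, the number of
solutions of `(d₂ - d₁)a = (d₄ - d₃)b` in `D⁴` by `E⁺(D)`. With `r_a(t)` the number of pairs
`(d₁, d₂)` with `(d₂ - d₁)a = t`, this count is `∑ₜ r_a(t) r_b(t) ≤ ½ ∑ₜ (r_a(t)² + r_b(t)²)`,
and both `∑ₜ r_a(t)²` and `∑ₜ r_b(t)²` equal `E⁺(D)` because scaling by a nonzero constant is
injective.
-/

open Classical in
/-- The line energy of a set of (non-axis-parallel) lines, where a line
`y = cx + d` is identified with the pair `(c, d)`: the number of quadruples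
`(ℓ₁,ℓ₂,ℓ₃,ℓ₄)` with `f_{ℓ₁}⁻¹ ∘ f_{ℓ₂} = f_{ℓ₃}⁻¹ ∘ f_{ℓ₄}` as functions. -/
noncomputable def lineEnergy (L : Finset (ℝ × ℝ)) : ℕ :=
  ((L ×ˢ L ×ˢ L ×ˢ L).filter fun q =>
    (fun x : ℝ => (q.2.1.1 * x + q.2.1.2 - q.1.2) / q.1.1) =
      (fun x : ℝ => (q.2.2.2.1 * x + q.2.2.2.2 - q.2.2.1.2) / q.2.2.1.1)).card

open Finset

section Collisions

variable {α β γ : Type*} [DecidableEq β]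

theorem card_filter_product_eq_sum_mul (s : Finset α) (t : Finset γ) (f : α → β) (g : γ → β)
    {u : Finset β} (hu : ∀ a ∈ s, f a ∈ u) :
    #{p ∈ s ×ˢ t | f p.1 = g p.2} = ∑ y ∈ u, #{a ∈ s | f a = y} * #{b ∈ t | g b = y} := by
  rw [card_eq_sum_card_fiberwise (f := fun p => f p.1) (t := u)
    fun p hp => hu _ (mem_product.1 (mem_filter.1 hp).1).1]
  refine sum_congr rfl fun y _ => ?_
  rw [filter_filter, ← card_product, ← filter_product]
  congr 1
  refine filter_congr fun p _ => ?_
  constructor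
  · rintro ⟨hfg, rfl⟩
    exact ⟨rfl, hfg.symm⟩
  · rintro ⟨hf, hg⟩
    exact ⟨hf.trans hg.symm, hf⟩

theorem two_mul_card_filter_eq_le (s : Finset α) (f g : α → β) :
    2 * #{p ∈ s ×ˢ s | f p.1 = g p.2} ≤
      #{p ∈ s ×ˢ s | f p.1 = f p.2} + #{p ∈ s ×ˢ s | g p.1 = g p.2} := by
  set u := s.image f ∪ s.image g
  have hf : ∀ a ∈ s, f a ∈ u := fun a ha => mem_union_left _ (mem_image_of_mem f ha)
  have hg : ∀ a ∈ s, g a ∈ u := fun a ha => mem_union_right _ (mem_image_of_mem g ha)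
  rw [card_filter_product_eq_sum_mul s s f g hf, card_filter_product_eq_sum_mul s s f f hf,
    card_filter_product_eq_sum_mul s s g g hg, mul_sum, ← sum_add_distrib]
  gcongr with y
  simpa only [← sq, mul_assoc] using two_mul_le_add_sq #{a ∈ s | f a = y} #{a ∈ s | g a = y}

theorem card_filter_eq_le_of_forall_eq_iff (s : Finset α) {f g : α → β}
    (hfg : ∀ a ∈ s, ∀ b ∈ s, f a = f b ↔ g a = g b) :
    #{p ∈ s ×ˢ s | f p.1 = g p.2} ≤ #{p ∈ s ×ˢ s | f p.1 = f p.2} := by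
  have hg : #{p ∈ s ×ˢ s | g p.1 = g p.2} = #{p ∈ s ×ˢ s | f p.1 = f p.2} := by
    refine congrArg card (filter_congr fun p hp => ?_)
    rw [mem_product] at hp
    exact (hfg _ hp.1 _ hp.2).symm
  have := two_mul_card_filter_eq_le s f g
  omega

end Collisions

theorem card_filter_sub_mul_eq_sub_mul_le {R : Type*} [CommRing R] [IsDomain R] [DecidableEq R]
    (D : Finset R) {a b : R} (ha : a ≠ 0) (hb : b ≠ 0) :
    #{p ∈ (D ×ˢ D) ×ˢ (D ×ˢ D) | (p.1.2 - p.1.1) * a = (p.2.2 - p.2.1) * b} ≤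
      #{p ∈ D ×ˢ D ×ˢ D ×ˢ D | p.1 + p.2.1 = p.2.2.1 + p.2.2.2} := by
  refine (card_filter_eq_le_of_forall_eq_iff (f := fun x : R × R => (x.2 - x.1) * a)
    (g := fun x => (x.2 - x.1) * b) _ fun x _ y _ => ?_).trans ?_
  · rw [mul_left_inj' ha, mul_left_inj' hb]
  refine card_le_card_of_injOn (fun p => (p.1.2, p.2.1, p.1.1, p.2.2)) (fun p hp => ?_) ?_
  · simp only [coe_filter, mem_product, Set.mem_ofPred_eq, mul_left_inj' ha] at hp ⊢
    exact ⟨⟨hp.1.1.2, hp.1.2.1, hp.1.1.1, hp.1.2.2⟩, by linear_combination hp.2⟩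
  · rintro ⟨⟨_, _⟩, _, _⟩ _ ⟨⟨_, _⟩, _, _⟩ _ h
    simp_all only [Prod.mk.injEq]

theorem fun_mul_add_eq_iff {R : Type*} [Ring R] {a b a' b' : R} :
    ((fun x => a * x + b) = fun x => a' * x + b') ↔ a = a' ∧ b = b' := by
  refine ⟨fun h => ?_, fun ⟨ha, hb⟩ => ha ▸ hb ▸ rfl⟩
  have h₀ := congrFun h 0
  have h₁ := congrFun h 1
  simp only [mul_zero, zero_add, mul_one] at h₀ h₁
  exact ⟨add_right_cancel (h₀ ▸ h₁), h₀⟩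

theorem fun_add_sub_div_eq_iff {K : Type*} [Field K] {c₁ c₂ c₃ c₄ d₁ d₂ d₃ d₄ : K}
    (h₁ : c₁ ≠ 0) (h₃ : c₃ ≠ 0) :
    ((fun x => (c₂ * x + d₂ - d₁) / c₁) = fun x => (c₄ * x + d₄ - d₃) / c₃) ↔
      c₂ * c₃ = c₄ * c₁ ∧ (d₂ - d₁) * c₃ = (d₄ - d₃) * c₁ := by
  have affine (c d d' c' : K) :
      (fun x => (c * x + d - d') / c') = fun x => c / c' * x + (d - d') / c' :=
    funext fun x => by ring
  rw [affine, affine, fun_mul_add_eq_iff, div_eq_div_iff h₁ h₃, div_eq_div_iff h₁ h₃]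

open Classical in
theorem lineEnergy_eq_card_filter {L : Finset (ℝ × ℝ)} (hL : ∀ l ∈ L, l.1 ≠ 0) :
    lineEnergy L = #{q ∈ L ×ˢ L ×ˢ L ×ˢ L | q.2.1.1 * q.2.2.1.1 = q.2.2.2.1 * q.1.1 ∧
      (q.2.1.2 - q.1.2) * q.2.2.1.1 = (q.2.2.2.2 - q.2.2.1.2) * q.1.1} := by
  unfold lineEnergy
  congr 1
  refine filter_congr fun q hq => ?_
  simp only [mem_product] at hq
  exact fun_add_sub_div_eq_iff (hL _ hq.1) (hL _ hq.2.2.1)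

open Classical in
theorem lineEnergy_le_mulEnergy_mul_addEnergy_general (C D : Finset ℝ)
    (hC : (0 : ℝ) ∉ C) :
    lineEnergy (C ×ˢ D) ≤
      ((C ×ˢ C ×ˢ C ×ˢ C).filter fun p =>
        p.1 * p.2.1 = p.2.2.1 * p.2.2.2).card *
      ((D ×ˢ D ×ˢ D ×ˢ D).filter fun p =>
        p.1 + p.2.1 = p.2.2.1 + p.2.2.2).card := by
  have hC₀ : ∀ c ∈ C, c ≠ 0 := fun c hc h => hC (h ▸ hc)
  rw [lineEnergy_eq_card_filter fun l hl => hC₀ _ (mem_product.1 hl).1, mul_comm]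
  refine card_le_mul_card_image_of_maps_to
    (f := fun q => (q.2.1.1, q.2.2.1.1, q.2.2.2.1, q.1.1)) (fun q hq => ?_) _ fun k hk => ?_
  · simp only [mem_filter, mem_product] at hq ⊢
    exact ⟨⟨hq.1.2.1.1, hq.1.2.2.1.1, hq.1.2.2.2.1, hq.1.1.1⟩, hq.2.1⟩
  simp only [mem_filter, mem_product] at hk
  refine (card_le_card_of_injOn (fun q => ((q.1.2, q.2.1.2), (q.2.2.1.2, q.2.2.2.2)))
      (fun q hq => ?_) fun q hq q' hq' h => ?_).trans
    (card_filter_sub_mul_eq_sub_mul_le D (hC₀ _ hk.1.2.1) (hC₀ _ hk.1.2.2.2))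
  · simp only [coe_filter, mem_filter, mem_product, Set.mem_ofPred_eq] at hq ⊢
    obtain ⟨⟨⟨⟨-, hd₁⟩, ⟨-, hd₂⟩, ⟨-, hd₃⟩, ⟨-, hd₄⟩⟩, -, hd⟩, rfl⟩ := hq
    exact ⟨⟨⟨hd₁, hd₂⟩, hd₃, hd₄⟩, hd⟩
  · simp only [coe_filter, mem_filter, Set.mem_ofPred_eq] at hq hq'
    have := hq.2.trans hq'.2.symm
    simp only [Prod.mk.injEq] at this h
    ext <;> simp only [this, h]

open Classical in
/-- For finite `C, D ⊆ ℝ∖{0}` and the set of lines `{y = cx + d : c ∈ C, d ∈ D}`,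
we have `E(𝓛) ≤ E^×(C) · E⁺(D)`. -/
theorem lineEnergy_le_mulEnergy_mul_addEnergy (C D : Finset ℝ)
    (hC : (0 : ℝ) ∉ C) (hD : (0 : ℝ) ∉ D) :
    lineEnergy (C ×ˢ D) ≤
      ((C ×ˢ C ×ˢ C ×ˢ C).filter fun p =>
        p.1 * p.2.1 = p.2.2.1 * p.2.2.2).card *
      ((D ×ˢ D ×ˢ D ×ˢ D).filter fun p =>
        p.1 + p.2.1 = p.2.2.1 + p.2.2.2).card :=
  lineEnergy_le_mulEnergy_mul_addEnergy_general C D hC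
end

section
/- Let C = {1,...,n^{1/3}} and D = {1,...,n^{2/3}} and let 𝓛 = {y = ax+b : a ∈ C, b ∈ D}. Then E(𝓛) = Ω(n^{8/3}); specifically, the quadruples with c₁ = c₃, c₂ = c₄ and d₂ − d₁ = d₄ − d₃ already contribute at least n^{2/3}·E⁺(D) = Ω(n^{8/3}) to the line energy. -/
open Finset
open scoped Pointwise Combinatorics.Additive

lemma card_filter_add_eq_add_eq_addEnergy {α : Type*} [DecidableEq α] [Add α] (s : Finset α) :
    #{p ∈ s ×ˢ s ×ˢ s ×ˢ s | p.1 + p.2.1 = p.2.2.1 + p.2.2.2} = E[s, s] :=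
  card_nbij' (fun p ↦ ((p.1, p.2.2.1), (p.2.1, p.2.2.2))) (fun q ↦ (q.1.1, q.2.1, q.1.2, q.2.2))
    (by intro p; simp +contextual) (by intro q; simp +contextual) (fun _ _ ↦ rfl) (fun _ _ ↦ rfl)

lemma card_sq_mul_addEnergy_le_lineEnergy (C D : Finset ℝ) :
    #C ^ 2 * E[D, D] ≤ lineEnergy (C ×ˢ D) := by
  rw [sq, ← card_product, addEnergy, ← card_product, lineEnergy]
  refine card_le_card_of_injOn
    (fun t ↦ ((t.1.1, t.2.1.2), (t.1.2, t.2.1.1), (t.1.1, t.2.2.1), (t.1.2, t.2.2.2))) ?_ ?_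
  · rintro ⟨⟨c, c'⟩, ⟨a₁, a₂⟩, b₁, b₂⟩ ht
    simp only [mem_coe, mem_product, mem_filter] at ht
    obtain ⟨⟨hc, hc'⟩, ⟨⟨ha₁, ha₂⟩, hb₁, hb₂⟩, hab⟩ := ht
    simp only [mem_coe, mem_filter, mem_product]
    refine ⟨by simp [*], funext fun x ↦ ?_⟩
    congr 1
    linarith
  · rintro ⟨⟨c, c'⟩, ⟨a₁, a₂⟩, b₁, b₂⟩ - ⟨⟨e, e'⟩, ⟨f₁, f₂⟩, g₁, g₂⟩ - h
    simp_all

lemma card_natCast_Icc_add_self_le {R : Type*} [AddMonoidWithOne R] [DecidableEq R] (N : ℕ) :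
    #((Icc 1 N).image (Nat.cast : ℕ → R) + (Icc 1 N).image Nat.cast) ≤ 2 * N := by
  rw [← Nat.coe_castAddMonoidHom, ← image_add]
  calc _ ≤ #(Icc 1 N + Icc 1 N) := card_image_le
    _ ≤ #(Icc (1 + 1) (N + N)) := card_le_card (Icc_add_Icc_subset _ _ _ _)
    _ ≤ 2 * N := by simp only [Nat.card_Icc]; omega

lemma card_pow_three_le_mul_addEnergy_of_card_add_le {α : Type*} [DecidableEq α] [Add α]
    {s : Finset α} {K : ℕ} (hs : #(s + s) ≤ K * #s) : #s ^ 3 ≤ K * E[s, s] := by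
  rcases (#s).eq_zero_or_pos with h | h
  · simp [h]
  refine Nat.le_of_mul_le_mul_left ?_ h
  calc #s * #s ^ 3 = #s ^ 2 * #s ^ 2 := by ring
    _ ≤ #(s + s) * E[s, s] := le_card_add_mul_addEnergy s s
    _ ≤ K * #s * E[s, s] := Nat.mul_le_mul_right _ hs
    _ = #s * (K * E[s, s]) := by ring

open Classical in
theorem lineEnergy_elekes_lower_general (m : ℕ) :
    let C : Finset ℝ := (Finset.Icc 1 m).image fun i => (i : ℝ)
    let D : Finset ℝ := (Finset.Icc 1 (m ^ 2)).image fun i => (i : ℝ)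
    let L : Finset (ℝ × ℝ) := C ×ˢ D
    let eD : ℕ := ((D ×ˢ D ×ˢ D ×ˢ D).filter fun p =>
      p.1 + p.2.1 = p.2.2.1 + p.2.2.2).card
    m ^ 2 * eD ≤ lineEnergy L ∧ ((m : ℝ) ^ 3) ^ (8 / 3 : ℝ) / 8 ≤ (m ^ 2 * eD : ℕ) := by
  intro C D L eD
  -- The coercions `Finset ℕ → Finset ℝ` in `C` and `D` elaborate to a monadic bind.
  have hC : C = (Icc 1 m).image Nat.cast := by simp only [C, bind_pure_comp, fmap_def, image_id']
  have hD : D = (Icc 1 (m ^ 2)).image Nat.cast := by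
    simp only [D, bind_pure_comp, fmap_def, image_id']
  have hcardC : #C = m := by simp [hC, card_image_of_injective _ Nat.cast_injective]
  have hcardD : #D = m ^ 2 := by simp [hD, card_image_of_injective _ Nat.cast_injective]
  have heD : eD = E[D, D] := card_filter_add_eq_add_eq_addEnergy D
  have hE : (m ^ 2) ^ 3 ≤ 2 * eD := by
    rw [heD, ← hcardD]
    refine card_pow_three_le_mul_addEnergy_of_card_add_le ?_
    rw [hcardD, hD]
    exact card_natCast_Icc_add_self_le _
  refine ⟨hcardC ▸ heD ▸ card_sq_mul_addEnergy_le_lineEnergy C D, ?_⟩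
  have hpow : ((m : ℝ) ^ 3) ^ (8 / 3 : ℝ) = (m : ℝ) ^ 8 := by
    rw [← Real.rpow_natCast_mul m.cast_nonneg]; norm_num
  have hm8 : (m : ℝ) ^ 8 ≤ 2 * (m ^ 2 * eD : ℕ) := by
    exact_mod_cast (show m ^ 8 ≤ 2 * (m ^ 2 * eD) by linarith [Nat.mul_le_mul_left (m ^ 2) hE])
  rw [hpow]
  linarith [(m ^ 2 * eD : ℕ).cast_nonneg (α := ℝ)]

open Classical in
/-- With `n = m³`, `C = {1,…,n^{1/3}}`, `D = {1,…,n^{2/3}}` and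
`𝓛 = {y = ax + b : a ∈ C, b ∈ D}`, the quadruples with `c₁ = c₃`, `c₂ = c₄`
and `d₂ − d₁ = d₄ − d₃` contribute exactly `n^{2/3}·E⁺(D)` to `E(𝓛)`, and
`n^{2/3}·E⁺(D) ≥ n^{8/3}/8`, so `E(𝓛) = Ω(n^{8/3})`. -/
theorem lineEnergy_elekes_lower (m : ℕ) (hm : 1 ≤ m) :
    let C : Finset ℝ := (Finset.Icc 1 m).image fun i => (i : ℝ)
    let D : Finset ℝ := (Finset.Icc 1 (m ^ 2)).image fun i => (i : ℝ)
    let L : Finset (ℝ × ℝ) := C ×ˢ D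
    let eD : ℕ := ((D ×ˢ D ×ˢ D ×ˢ D).filter fun p =>
      p.1 + p.2.1 = p.2.2.1 + p.2.2.2).card
    m ^ 2 * eD ≤ lineEnergy L ∧ ((m : ℝ) ^ 3) ^ (8 / 3 : ℝ) / 8 ≤ (m ^ 2 * eD : ℕ) :=
  lineEnergy_elekes_lower_general m
end
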